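/- Suppose there exists τ̂ ∈ ℝ^N with τ̂_i < φ_i((λ_a + τ̂_{j_a})_{a∈A}) for every node i ≠ d, and let (τ, z) solve the dynamic programming system at λ. Then the matrix I − P̂(z) is invertible, where P̂(z) is the submatrix of P(z) with rows and columns indexed by the nodes other than d. -/

import Mathlib

/-!
Put `w j = (τ - τ̂) j - (τ - τ̂) d`, so that `w d = 0`. The tangent-plane inequality for the
concave `φ_i` at `z`, evaluated at `ẑ = λ + τ̂ ∘ head`, together with the strict subsolution
property of `τ̂` gives `P̂(z) w < w` componentwise. As `P̂(z)` is nonnegative with row sums at most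
`1`, a minimal entry of `w` cannot be `≤ 0`, so `w > 0`. Rescaling the columns of `I - P̂(z)` by
`w` then yields a strictly row diagonally dominant matrix, which is invertible by Gershgorin.
-/

open Finset Matrix

theorem ConcaveOn.le_add_of_hasFDerivAt {E : Type*} [NormedAddCommGroup E] [NormedSpace ℝ E]
    {s : Set E} {φ : E → ℝ} {L : E →L[ℝ] ℝ} {x y : E} (hφ : ConcaveOn ℝ s φ)
    (hx : x ∈ s) (hy : y ∈ s) (hL : HasFDerivAt φ L x) :
    φ y ≤ φ x + L (y - x) := by
  have hline : ConcaveOn ℝ (AffineMap.lineMap (k := ℝ) x y ⁻¹' s) (φ ∘ AffineMap.lineMap x y) :=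
    hφ.comp_affineMap _
  have hderiv : HasDerivAt (φ ∘ AffineMap.lineMap (k := ℝ) x y) (L (y - x)) 0 := by
    refine HasFDerivAt.comp_hasDerivAt (0 : ℝ) ?_ AffineMap.hasDerivAt_lineMap
    rwa [AffineMap.lineMap_apply_zero]
  have hslope := hline.slope_le_of_hasDerivAt (by simpa) (by simpa) one_pos hderiv
  simp only [slope_def_field, Function.comp_apply, AffineMap.lineMap_apply_one,
    AffineMap.lineMap_apply_zero, sub_zero, div_one] at hslope
  linarith

namespace Matrix

variable {ι : Type*} [Fintype ι] {M : Matrix ι ι ℝ} {w : ι → ℝ}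

theorem pos_of_mulVec_lt_of_sum_le_one (hM : ∀ i j, 0 ≤ M i j)
    (hrow : ∀ i, ∑ j, M i j ≤ 1) (hw : ∀ i, (M *ᵥ w) i < w i) (i : ι) : 0 < w i := by
  obtain ⟨k, -, hk⟩ := exists_min_image univ w ⟨i, mem_univ i⟩
  suffices 0 < w k from this.trans_le (hk i (mem_univ i))
  by_contra! hwk
  have : w k ≤ (M *ᵥ w) k :=
    calc w k = 1 * w k := (one_mul _).symm
      _ ≤ (∑ j, M k j) * w k := mul_le_mul_of_nonpos_right (hrow k) hwk
      _ = ∑ j, M k j * w k := sum_mul _ _ _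
      _ ≤ ∑ j, M k j * w j :=
        sum_le_sum fun j _ => mul_le_mul_of_nonneg_left (hk j (mem_univ j)) (hM k j)
  exact (hw k).not_ge this

theorem isUnit_one_sub_of_mulVec_lt [DecidableEq ι] (hM : ∀ i j, 0 ≤ M i j)
    (hw_pos : ∀ i, 0 < w i) (hw : ∀ i, (M *ᵥ w) i < w i) : IsUnit (1 - M) := by
  have hdiag : ∀ i, M i i * w i < w i := fun i =>
    (single_le_sum (fun j _ => mul_nonneg (hM i j) (hw_pos j).le) (mem_univ i)).trans_lt (hw i)
  have hdom : ∀ i, ∑ j ∈ univ.erase i, ‖((1 - M) * diagonal w) i j‖ <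
      ‖((1 - M) * diagonal w) i i‖ := by
    intro i
    have hoff : ∀ j ∈ univ.erase i, ‖((1 - M) * diagonal w) i j‖ = M i j * w j := fun j hj => by
      rw [mul_diagonal, sub_apply, one_apply_ne (ne_of_mem_erase hj).symm, zero_sub, neg_mul,
        norm_neg, Real.norm_of_nonneg (mul_nonneg (hM i j) (hw_pos j).le)]
    rw [sum_congr rfl hoff, sum_erase_eq_sub (mem_univ i), mul_diagonal, sub_apply, one_apply_eq,
      sub_mul, one_mul, Real.norm_of_nonneg (sub_pos.2 (hdiag i)).le]
    exact sub_lt_sub_right (hw i) _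
  have hdet := det_ne_zero_of_sum_row_lt_diag hdom
  rw [det_mul, det_diagonal] at hdet
  rw [isUnit_iff_isUnit_det, isUnit_iff_ne_zero]
  exact left_ne_zero_of_mul hdet

end Matrix

section ReducedTransition

variable {N A : Type*} [DecidableEq N] [Fintype A] (tail head : A → N) (d : N) (p : N → A → ℝ)

def reducedTransition : Matrix {i : N // i ≠ d} {i : N // i ≠ d} ℝ :=
  Matrix.of fun i j => ∑ a ∈ univ.filter (fun a => tail a = i.1 ∧ head a = j.1), p i.1 a

theorem reducedTransition_mulVec [Fintype N] (u : N → ℝ) (i : {i : N // i ≠ d}) :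
    (reducedTransition tail head d p *ᵥ fun j => u j.1) i =
      ∑ a ∈ univ.filter (fun a => tail a = i.1 ∧ head a ≠ d), p i.1 a * u (head a) := by
  simp only [mulVec, dotProduct, reducedTransition, of_apply]
  rw [← sum_fiberwise_of_maps_to (t := univ.filter (· ≠ d)) (g := head)
    (fun a ha => mem_filter.2 ⟨mem_univ _, (mem_filter.1 ha).2.2⟩),
    sum_subtype _ (fun j => mem_filter.trans (and_iff_right (mem_univ j)))]
  refine sum_congr rfl fun j _ => ?_
  rw [sum_mul, filter_filter]
  refine sum_congr (filter_congr fun a _ => ?_) fun a ha => ?_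
  · exact ⟨fun ⟨ht, hh⟩ => ⟨⟨ht, hh ▸ j.2⟩, hh⟩, fun ⟨⟨ht, _⟩, hh⟩ => ⟨ht, hh⟩⟩
  · rw [(mem_filter.1 ha).2.2]

theorem reducedTransition_mulVec_of_eq_zero [Fintype N] {u : N → ℝ} (hu : u d = 0)
    {i : {i : N // i ≠ d}} (hp : ∀ a, tail a ≠ i.1 → p i.1 a = 0) :
    (reducedTransition tail head d p *ᵥ fun j => u j.1) i = ∑ a, p i.1 a * u (head a) := by
  rw [reducedTransition_mulVec, sum_filter_of_ne]
  intro a _ hpu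
  refine ⟨by_contra fun ha => left_ne_zero_of_mul hpu (hp a ha), fun ha => ?_⟩
  exact right_ne_zero_of_mul hpu (ha ▸ hu)

variable {tail head d p}

theorem reducedTransition_nonneg (hp : ∀ i, i ≠ d → ∀ a, 0 ≤ p i a) (i j : {i : N // i ≠ d}) :
    0 ≤ reducedTransition tail head d p i j :=
  sum_nonneg fun a _ => hp i.1 i.2 a

theorem sum_reducedTransition_le_one [Fintype N] (hp : ∀ i, i ≠ d → ∀ a, 0 ≤ p i a)
    (hp_sum : ∀ i, i ≠ d → ∑ a ∈ univ.filter (fun a => tail a = i), p i a = 1)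
    (i : {i : N // i ≠ d}) : ∑ j, reducedTransition tail head d p i j ≤ 1 := by
  have hrow := reducedTransition_mulVec tail head d p (fun _ => 1) i
  simp only [mulVec, dotProduct, mul_one] at hrow
  calc ∑ j, reducedTransition tail head d p i j
      = ∑ a ∈ univ.filter (fun a => tail a = i.1 ∧ head a ≠ d), p i.1 a := hrow
    _ ≤ ∑ a ∈ univ.filter (fun a => tail a = i.1), p i.1 a :=
      sum_le_sum_of_subset_of_nonneg (fun a ha => mem_filter.2 ⟨mem_univ a, (mem_filter.1 ha).2.1⟩)
        fun a _ _ => hp i.1 i.2 a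
    _ = 1 := hp_sum i.1 i.2

end ReducedTransition

theorem sum_mul_sub_lt_of_strict_subsolution {N A : Type*} [Fintype A] (head : A → N)
    (lam : A → ℝ) {φ : (A → ℝ) → ℝ} {D z : A → ℝ} {τ τhat : N → ℝ} {i : N}
    (hφ : ConcaveOn ℝ Set.univ φ)
    (hD : HasFDerivAt φ (∑ a, D a • (ContinuousLinearMap.proj a : (A → ℝ) →L[ℝ] ℝ)) z)
    (hD_sum : ∑ a, D a = 1) (hsub : τhat i < φ (fun a => lam a + τhat (head a)))
    (hz : ∀ a, z a = lam a + τ (head a)) (hτ : τ i = φ z) (c : ℝ) :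
    ∑ a, D a * ((τ - τhat) (head a) - c) < (τ - τhat) i - c := by
  have htangent :=
    hφ.le_add_of_hasFDerivAt trivial trivial hD (y := fun a => lam a + τhat (head a))
  have hlin : (∑ a, D a • (ContinuousLinearMap.proj a : (A → ℝ) →L[ℝ] ℝ))
      ((fun a => lam a + τhat (head a)) - z) = -∑ a, D a * (τ - τhat) (head a) := by
    simp only [_root_.sum_apply, _root_.smul_apply,
      ContinuousLinearMap.proj_apply, Pi.sub_apply, hz, smul_eq_mul, ← sum_neg_distrib]
    exact sum_congr rfl fun a _ => by ring
  have hshift : ∑ a, D a * ((τ - τhat) (head a) - c) = ∑ a, D a * (τ - τhat) (head a) - c := by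
    simp only [mul_sub, sum_sub_distrib, ← sum_mul, hD_sum, one_mul]
  rw [hlin, ← hτ] at htangent
  rw [hshift, Pi.sub_apply]
  linarith

theorem stmt5_general {N A : Type} [Fintype N] [Fintype A] [DecidableEq N]
    (tail head : A → N) (d : N) (lam : A → ℝ)
    (phi : N → (A → ℝ) → ℝ) (Dphi : N → (A → ℝ) → A → ℝ)
    (hconc : ∀ i, i ≠ d → ConcaveOn ℝ Set.univ (phi i))
    (hderiv : ∀ i, i ≠ d → ∀ z : A → ℝ,
      HasFDerivAt (phi i)
        (∑ a, Dphi i z a • (ContinuousLinearMap.proj a : (A → ℝ) →L[ℝ] ℝ)) z)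
    (hDnn : ∀ i, i ≠ d → ∀ z a, 0 ≤ Dphi i z a)
    (hDzero : ∀ i, i ≠ d → ∀ (z : A → ℝ) a, tail a ≠ i → Dphi i z a = 0)
    (hDsum : ∀ i, i ≠ d → ∀ z : A → ℝ,
      ∑ a ∈ Finset.univ.filter (fun a => tail a = i), Dphi i z a = 1)
    (τhat : N → ℝ)
    (hsub : ∀ i, i ≠ d → τhat i < phi i (fun a => lam a + τhat (head a)))
    (τ : N → ℝ) (z : A → ℝ)
    (hz : ∀ a, z a = lam a + τ (head a))
    (hτ : ∀ i, i ≠ d → τ i = phi i z) :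
    IsUnit ((1 : Matrix {i : N // i ≠ d} {i : N // i ≠ d} ℝ) -
      Matrix.of (fun i j : {i : N // i ≠ d} =>
        ∑ a ∈ Finset.univ.filter (fun a => tail a = i.1 ∧ head a = j.1),
          Dphi i.1 z a)) := by
  change IsUnit (1 - reducedTransition tail head d fun i => Dphi i z)
  set P := reducedTransition tail head d fun i => Dphi i z
  have hD_sum : ∀ i, i ≠ d → ∑ a, Dphi i z a = 1 := fun i hi => by
    rw [← hDsum i hi z, sum_filter_of_ne fun a _ ha => by_contra (ha ∘ hDzero i hi z a)]
  let w : N → ℝ := fun j => (τ - τhat) j - (τ - τhat) d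
  have hw : ∀ i, (P *ᵥ fun j => w j.1) i < w i := fun i => by
    rw [reducedTransition_mulVec_of_eq_zero tail head d _ (sub_self _) (hDzero i.1 i.2 z)]
    exact sum_mul_sub_lt_of_strict_subsolution head lam (hconc i.1 i.2) (hderiv i.1 i.2 z)
      (hD_sum i.1 i.2) (hsub i.1 i.2) hz (hτ i.1 i.2) _
  have hP : ∀ i j, 0 ≤ P i j := reducedTransition_nonneg fun i hi => hDnn i hi z
  have hw_pos := pos_of_mulVec_lt_of_sum_le_one hP
    (sum_reducedTransition_le_one (fun i hi => hDnn i hi z) fun i hi => hDsum i hi z) hw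
  exact isUnit_one_sub_of_mulVec_lt hP hw_pos hw

/-- if there exists `τ̂` with `τ̂_i < φ_i((λ_a + τ̂_{j_a})_a)` for all
`i ≠ d` and `(τ, z)` solves the dynamic programming system at `λ`, then the
matrix `I − P̂(z)` (rows/columns indexed by nodes `≠ d`) is invertible. -/
theorem stmt5 {N A : Type} [Fintype N] [Fintype A] [DecidableEq N] [DecidableEq A]
    (tail head : A → N) (d : N) (lam : A → ℝ)
    (phi : N → (A → ℝ) → ℝ) (Dphi : N → (A → ℝ) → A → ℝ)
    (hout : ∀ i, i ≠ d → ∃ a, tail a = i)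
    (hdep : ∀ i, i ≠ d → ∀ z z' : A → ℝ, (∀ a, tail a = i → z a = z' a) →
      phi i z = phi i z')
    (hconc : ∀ i, i ≠ d → ConcaveOn ℝ Set.univ (phi i))
    (hderiv : ∀ i, i ≠ d → ∀ z : A → ℝ,
      HasFDerivAt (phi i)
        (∑ a, Dphi i z a • (ContinuousLinearMap.proj a : (A → ℝ) →L[ℝ] ℝ)) z)
    (hmono : ∀ i, i ≠ d → Monotone (phi i))
    (hDnn : ∀ i, i ≠ d → ∀ z a, 0 ≤ Dphi i z a)
    (hDzero : ∀ i, i ≠ d → ∀ (z : A → ℝ) a, tail a ≠ i → Dphi i z a = 0)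
    (hDsum : ∀ i, i ≠ d → ∀ z : A → ℝ,
      ∑ a ∈ Finset.univ.filter (fun a => tail a = i), Dphi i z a = 1)
    (τhat : N → ℝ)
    (hsub : ∀ i, i ≠ d → τhat i < phi i (fun a => lam a + τhat (head a)))
    (τ : N → ℝ) (z : A → ℝ)
    (hτd : τ d = 0) (hz : ∀ a, z a = lam a + τ (head a))
    (hτ : ∀ i, i ≠ d → τ i = phi i z) :
    IsUnit ((1 : Matrix {i : N // i ≠ d} {i : N // i ≠ d} ℝ) -
      Matrix.of (fun i j : {i : N // i ≠ d} =>
        ∑ a ∈ Finset.univ.filter (fun a => tail a = i.1 ∧ head a = j.1),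
          Dphi i.1 z a)) :=
  stmt5_general tail head d lam phi Dphi hconc hderiv hDnn hDzero hDsum τhat hsub τ z hz hτ
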